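/- (Proposition 6.1) Let ξ = exp(iπ/5) ∈ ℂ, and define the maps r₁, r₂, T : ℂ → ℂ by r₁(z) = -conj(z), r₂(z) = -ξ⁸ · conj(z), and T(z) = z + ξ². For every n ∈ ℕ, the set of complex numbers of the form (f_k ∘ ⋯ ∘ f_1)(0), where k ∈ ℕ, each f_i ∈ {r₁, r₂, T}, and T occurs at most n times among f_1, …, f_k, is exactly Q₂(n) = {Σ_{j=0}^{9} m_j ξ^j : m₀, …, m₉ ∈ ℕ, Σ_{j=0}^{9} m_j ≤ n}. That is, Q₂(n) consists of all sums of at most n (not necessarily distinct) 10th roots of unity. -/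

import Mathlib

open Complex

/-- ξ = exp(iπ/5), a primitive 10th root of unity. -/
noncomputable def xi : ℂ := Complex.exp (Real.pi * Complex.I / 5)

/-- The H₂^aff-induced quasicrystal fragment with cut-off parameter n:
all sums of at most n (not necessarily distinct) 10th roots of unity. -/
noncomputable def Q2 (n : ℕ) : Set ℂ :=
  {z : ℂ | ∃ m : Fin 10 → ℕ, (∑ j, m j) ≤ n ∧ z = ∑ j, (m j : ℂ) * xi ^ (j : ℕ)}

/-- The three generators of H₂^aff acting on ℂ: the reflections r₁, r₂ and the
translation T by the highest root ξ². -/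
noncomputable def gen : Fin 3 → ℂ → ℂ
  | 0 => fun z => -(starRingEnd ℂ z)
  | 1 => fun z => -xi ^ 8 * starRingEnd ℂ z
  | 2 => fun z => z + xi ^ 2

/-!
The reflections `r₁`, `r₂` are additive and map 10th roots of unity to 10th roots of unity,
while `T` adds the root `ξ²`; so a word with at most `n` letters `T` sends `0` to a sum of at
most `n` roots. Conversely, `r₁ ∘ r₂` is the rotation by `ξ²`, so conjugating `T` by its powers
and by `r₁` yields, for every root `ξʲ`, a word with a single `T` that translates by `ξʲ`;
concatenating such words realises any sum of roots.
-/

def sumsOfRootsOfUnity (R : Type*) [CommSemiring R] (k n : ℕ) : Set R :=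
  {z | ∃ s : Multiset R, (∀ x ∈ s, x ^ k = 1) ∧ Multiset.card s ≤ n ∧ s.sum = z}

section SumsOfRootsOfUnity

variable {R : Type*} [CommSemiring R] {k n n' : ℕ} {z : R}

theorem sumsOfRootsOfUnity_mono (h : n ≤ n') :
    sumsOfRootsOfUnity R k n ⊆ sumsOfRootsOfUnity R k n' := by
  rintro _ ⟨s, hs, hcard, rfl⟩
  exact ⟨s, hs, hcard.trans h, rfl⟩

theorem add_mem_sumsOfRootsOfUnity {c : R} (hc : c ^ k = 1) (hz : z ∈ sumsOfRootsOfUnity R k n) :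
    z + c ∈ sumsOfRootsOfUnity R k (n + 1) := by
  obtain ⟨s, hs, hcard, rfl⟩ := hz
  refine ⟨c ::ₘ s, ?_, by simpa using hcard, by rw [Multiset.sum_cons, add_comm]⟩
  simpa [hc] using hs

theorem map_mem_sumsOfRootsOfUnity {R' : Type*} [CommSemiring R'] (φ : R →+ R')
    (hφ : ∀ x : R, x ^ k = 1 → φ x ^ k = 1) (hz : z ∈ sumsOfRootsOfUnity R k n) :
    φ z ∈ sumsOfRootsOfUnity R' k n := by
  obtain ⟨s, hs, hcard, rfl⟩ := hz
  refine ⟨s.map φ, ?_, by simpa using hcard, (map_multiset_sum φ s).symm⟩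
  simpa using fun x hx => hφ x (hs x hx)

theorem sum_pow_mem_sumsOfRootsOfUnity {ζ : R} (hζ : ζ ^ k = 1) {m : Fin k → ℕ}
    (hm : ∑ j, m j ≤ n) : ∑ j, (m j : R) * ζ ^ (j : ℕ) ∈ sumsOfRootsOfUnity R k n := by
  refine ⟨∑ j, m j • {ζ ^ (j : ℕ)}, ?_, ?_, ?_⟩
  · simp only [Multiset.mem_sum, Multiset.mem_nsmul, Multiset.mem_singleton]
    rintro x ⟨j, -, -, rfl⟩
    rw [pow_right_comm, hζ, one_pow]
  · simpa [Multiset.card_sum, Multiset.card_nsmul] using hm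
  · simp [Multiset.sum_sum, Multiset.sum_nsmul, nsmul_eq_mul]

end SumsOfRootsOfUnity

theorem IsPrimitiveRoot.exists_sum_pow_eq_of_mem_sumsOfRootsOfUnity {R : Type*} [CommRing R]
    [IsDomain R] {k n : ℕ} [NeZero k] {ζ z : R} (hζ : IsPrimitiveRoot ζ k)
    (hz : z ∈ sumsOfRootsOfUnity R k n) :
    ∃ m : Fin k → ℕ, ∑ j, m j ≤ n ∧ z = ∑ j, (m j : R) * ζ ^ (j : ℕ) := by
  obtain ⟨s, hs, hcard, rfl⟩ := hz
  suffices ∃ m : Fin k → ℕ, ∑ j, m j = Multiset.card s ∧ s.sum = ∑ j, (m j : R) * ζ ^ (j : ℕ) by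
    obtain ⟨m, hm, hsum⟩ := this
    exact ⟨m, hm ▸ hcard, hsum⟩
  clear hcard
  induction s using Multiset.induction_on with
  | empty => exact ⟨0, by simp, by simp⟩
  | cons a s ih =>
    obtain ⟨i, hi, rfl⟩ := hζ.eq_pow_of_pow_eq_one (hs a (Multiset.mem_cons_self a s))
    obtain ⟨m, hm, hsum⟩ := ih fun x hx => hs x (Multiset.mem_cons_of_mem hx)
    refine ⟨m + Pi.single ⟨i, hi⟩ 1, ?_, ?_⟩
    · simp [Finset.sum_add_distrib, hm]
    · simp [Finset.sum_add_distrib, hsum, add_mul, Pi.single_apply, add_comm]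

theorem isPrimitiveRoot_xi : IsPrimitiveRoot xi 10 := by
  unfold xi
  convert Complex.isPrimitiveRoot_exp 10 (by norm_num) using 2
  push_cast
  ring

theorem xi_pow_five : xi ^ 5 = -1 :=
  (isPrimitiveRoot_xi.pow (by norm_num) (by norm_num : 10 = 5 * 2)).eq_neg_one_of_two_right

theorem xi_pow_eq_xi_pow_iff {a b : ℕ} : xi ^ a = xi ^ b ↔ a ≡ b [MOD 10] := by
  rw [(isPrimitiveRoot_xi.isOfFinOrder (by norm_num)).pow_eq_pow_iff_modEq,
    ← isPrimitiveRoot_xi.eq_orderOf]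

theorem conj_xi : starRingEnd ℂ xi = xi ^ 9 := by
  have hnorm : ‖xi‖ = 1 :=
    Complex.norm_eq_one_of_pow_eq_one isPrimitiveRoot_xi.pow_eq_one (by norm_num)
  rw [← Complex.inv_eq_conj hnorm]
  refine inv_eq_of_mul_eq_one_right ?_
  rw [← pow_succ', isPrimitiveRoot_xi.pow_eq_one]

theorem gen_zero_pow_eq_one {x : ℂ} (hx : x ^ 10 = 1) : gen 0 x ^ 10 = 1 := by
  simp [gen, Even.neg_pow (by decide : Even 10), ← map_pow, hx]

theorem gen_one_pow_eq_one {x : ℂ} (hx : x ^ 10 = 1) : gen 1 x ^ 10 = 1 := by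
  have : gen 1 x ^ 10 = (xi ^ 10) ^ 8 * starRingEnd ℂ (x ^ 10) := by
    simp only [gen, map_pow]
    ring
  rw [this, hx, isPrimitiveRoot_xi.pow_eq_one]
  simp

noncomputable def act (fs : List (Fin 3)) (z : ℂ) : ℂ := fs.foldl (fun w i => gen i w) z

theorem act_append (fs gs : List (Fin 3)) (z : ℂ) : act (fs ++ gs) z = act gs (act fs z) :=
  List.foldl_append ..

theorem act_singleton (i : Fin 3) (z : ℂ) : act [i] z = gen i z := rfl

theorem act_zero_mem_sumsOfRootsOfUnity (fs : List (Fin 3)) :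
    act fs 0 ∈ sumsOfRootsOfUnity ℂ 10 (fs.count 2) := by
  induction fs using List.reverseRecOn with
  | nil => exact ⟨0, by simp, by simp, by simp [act]⟩
  | append_singleton fs i ih =>
    rw [act_append, act_singleton, List.count_append]
    fin_cases i
    · simpa using map_mem_sumsOfRootsOfUnity
        (AddMonoidHom.mk' (gen 0) fun x y => by simp only [gen, map_add]; ring)
        (fun _ => gen_zero_pow_eq_one) ih
    · simpa using map_mem_sumsOfRootsOfUnity
        (AddMonoidHom.mk' (gen 1) fun x y => by simp only [gen, map_add]; ring)
        (fun _ => gen_one_pow_eq_one) ih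
    · exact add_mem_sumsOfRootsOfUnity (c := xi ^ 2)
        (by rw [pow_right_comm, isPrimitiveRoot_xi.pow_eq_one, one_pow]) ih

def oneStepTranslations : Set ℂ :=
  {c | ∃ w : List (Fin 3), w.count 2 = 1 ∧ ∀ z, act w z = z + c}

theorem xi_sq_mem_oneStepTranslations : xi ^ 2 ∈ oneStepTranslations :=
  ⟨[2], rfl, fun _ => rfl⟩

theorem neg_conj_mem_oneStepTranslations {c : ℂ} (hc : c ∈ oneStepTranslations) :
    -starRingEnd ℂ c ∈ oneStepTranslations := by
  obtain ⟨w, hw, hwc⟩ := hc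
  refine ⟨[0] ++ w ++ [0], by simp [hw], fun z => ?_⟩
  rw [act_append, act_append, act_singleton, hwc, act_singleton]
  simp only [gen, map_add, map_neg, Complex.conj_conj]
  ring

theorem act_zero_one (z : ℂ) : act [0, 1] z = xi ^ 8 * z := by
  simp [act, gen]

theorem act_one_zero (z : ℂ) : act [1, 0] z = xi ^ 2 * z := by
  have hconj : starRingEnd ℂ (xi ^ 8) = xi ^ 2 := by
    rw [map_pow, conj_xi, ← pow_mul, xi_pow_eq_xi_pow_iff]
    decide
  simp [act, gen, hconj]

theorem xi_sq_mul_mem_oneStepTranslations {c : ℂ} (hc : c ∈ oneStepTranslations) :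
    xi ^ 2 * c ∈ oneStepTranslations := by
  obtain ⟨w, hw, hwc⟩ := hc
  refine ⟨[0, 1] ++ w ++ [1, 0], by simp [hw], fun z => ?_⟩
  rw [act_append, act_append, act_zero_one, hwc, act_one_zero]
  linear_combination z * isPrimitiveRoot_xi.pow_eq_one

theorem xi_pow_add_two_mem_oneStepTranslations (j : ℕ) : xi ^ (j + 2) ∈ oneStepTranslations := by
  induction j using Nat.twoStepInduction with
  | zero => exact xi_sq_mem_oneStepTranslations
  | one =>
    have h : xi ^ 3 = -starRingEnd ℂ (xi ^ 2) := by
      rw [map_pow, conj_xi, ← pow_mul, ← neg_one_mul, ← xi_pow_five, ← pow_add,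
        xi_pow_eq_xi_pow_iff]
      decide
    rw [h]
    exact neg_conj_mem_oneStepTranslations xi_sq_mem_oneStepTranslations
  | more j ih _ =>
    rw [show j + 2 + 2 = 2 + (j + 2) by ring, pow_add]
    exact xi_sq_mul_mem_oneStepTranslations ih

theorem mem_oneStepTranslations_of_pow_eq_one {x : ℂ} (hx : x ^ 10 = 1) :
    x ∈ oneStepTranslations := by
  obtain ⟨i, -, rfl⟩ := isPrimitiveRoot_xi.eq_pow_of_pow_eq_one hx
  rw [xi_pow_eq_xi_pow_iff.mpr (show i ≡ i + 8 + 2 [MOD 10] by simp [Nat.ModEq, add_assoc])]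
  exact xi_pow_add_two_mem_oneStepTranslations _

theorem exists_act_zero_eq_sum (s : Multiset ℂ) (hs : ∀ x ∈ s, x ^ 10 = 1) :
    ∃ fs : List (Fin 3), fs.count 2 = Multiset.card s ∧ act fs 0 = s.sum := by
  induction s using Multiset.induction_on with
  | empty => exact ⟨[], rfl, rfl⟩
  | cons a s ih =>
    obtain ⟨fs, hfs, hsum⟩ := ih fun x hx => hs x (Multiset.mem_cons_of_mem hx)
    obtain ⟨w, hw, hwa⟩ :=
      mem_oneStepTranslations_of_pow_eq_one (hs a (Multiset.mem_cons_self a s))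
    refine ⟨fs ++ w, by simp [hfs, hw], ?_⟩
    rw [act_append, hwa, hsum, Multiset.sum_cons, add_comm]

theorem Q2_eq_sumsOfRootsOfUnity (n : ℕ) : Q2 n = sumsOfRootsOfUnity ℂ 10 n := by
  ext z
  constructor
  · rintro ⟨m, hm, rfl⟩
    exact sum_pow_mem_sumsOfRootsOfUnity isPrimitiveRoot_xi.pow_eq_one hm
  · intro hz
    obtain ⟨m, hm, rfl⟩ := isPrimitiveRoot_xi.exists_sum_pow_eq_of_mem_sumsOfRootsOfUnity hz
    exact ⟨m, hm, rfl⟩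

/-- Proposition 6.1: the points obtained from the origin by applying r₁, r₂ and at
most n translations T (in any order) are exactly the sums of at most n roots of Δ₂. -/
theorem Q2_eq_orbit (n : ℕ) :
    {z : ℂ | ∃ fs : List (Fin 3), fs.count 2 ≤ n ∧
      z = fs.foldl (fun w i => gen i w) 0} = Q2 n := by
  rw [Q2_eq_sumsOfRootsOfUnity]
  refine Set.Subset.antisymm ?_ ?_
  · rintro _ ⟨fs, hfs, rfl⟩
    exact sumsOfRootsOfUnity_mono hfs (act_zero_mem_sumsOfRootsOfUnity fs)
  · rintro _ ⟨s, hs, hcard, rfl⟩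
    obtain ⟨fs, hfs, hact⟩ := exists_act_zero_eq_sum s hs
    exact ⟨fs, hfs ▸ hcard, hact.symm⟩
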